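/- Let F = ℤ/2ℤ, let C be a bounded-above chain complex of F-vector spaces, and let f : C → C be a chain map with f² = 0, making C a chain complex C_f of modules over A = F[x]/(x²) where x acts by f. Then the total complex of the bicomplex ⋯ → ξ⁻²(C⊗A) → ξ⁻¹(C⊗A) → (C⊗A), with horizontal differentials given by f⊗1 + 1⊗x (acting as in Definition of the preferred resolution), together with the map to C_f sending the degree-0 column c⊗r ↦ rc and all other columns to 0, is an A-linear quasi-isomorphism from a complex of free A-modules. -/

import Mathlib

/-!
STATEMENT 1: Let F = ℤ/2ℤ, A = F[x]/(x²), C a bounded-above F-chain complex, and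
f : C → C a chain map with f² = 0, making C an A-chain complex C_f (x acts by f).
Then the total complex C̄ = C ⊗ A ⊗ Ξ (Ξ = F[ξ,ξ⁻¹]/ξF[ξ]), i.e. the bicomplex
⋯ → ξ⁻²(C⊗A) → ξ⁻¹(C⊗A) → (C⊗A) with horizontal differential f⊗1 + 1⊗x, together with
the map q : C̄ → C_f given on the degree-0 column by c⊗r ↦ r·c and by 0 on the other
columns, is an A-linear quasi-isomorphism from a complex of free A-modules.
-/

set_option synthInstance.maxHeartbeats 1000000
set_option maxHeartbeats 1000000

noncomputable section
open scoped TensorProduct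

abbrev F2 := ZMod 2

/-- `A = F[x]/(x²)`. -/
abbrev Asq : Type := Polynomial F2 ⧸ Ideal.span {(Polynomial.X : Polynomial F2) ^ 2}

def xA : Asq := Ideal.Quotient.mk _ Polynomial.X

/-- `Ξ = F[ξ,ξ⁻¹]/ξF[ξ]`, basis `ξ^{-n}`, `n ∈ ℕ`. -/
abbrev Xi1 : Type := ℕ →₀ F2

/-- Multiplication by `ξ`. -/
def xish : Xi1 →ₗ[F2] Xi1 :=
  Finsupp.lsum F2 fun n => if n = 0 then (0 : F2 →ₗ[F2] Xi1) else Finsupp.lsingle (n - 1)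

def IsBddAboveComplex (C : Type) [AddCommGroup C] [Module F2 C]
    (d : C →ₗ[F2] C) : Prop :=
  d.comp d = 0 ∧
  ∃ Cdeg : ℤ → Submodule F2 C,
    DirectSum.IsInternal Cdeg ∧
    (∃ N : ℤ, ∀ n : ℤ, N < n → Cdeg n = ⊥) ∧
    ∀ n : ℤ, ∀ c ∈ Cdeg n, d c ∈ Cdeg (n + 1)

variable (C : Type) [AddCommGroup C] [Module F2 C]

/-- The underlying module of the preferred resolution, `C̄ = (A ⊗ Ξ) ⊗ C`;
as an `A`-module (acting on the first factor), it is free. -/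
abbrev CbarA : Type := (Asq ⊗[F2] Xi1) ⊗[F2] C

/-- The total differential of the bicomplex: `d⊗1⊗1 + f⊗1⊗ξ + 1⊗x⊗ξ`
(vertical differential `d` of `C`, horizontal differential `f⊗1 + 1⊗x`). -/
def Dtot (d f : C →ₗ[F2] C) : CbarA C →ₗ[F2] CbarA C :=
  TensorProduct.map LinearMap.id d +
    TensorProduct.map (TensorProduct.map LinearMap.id xish) f +
    TensorProduct.map (TensorProduct.map (LinearMap.mulLeft F2 xA) xish) LinearMap.id

/-- The action of `x ∈ A` on `C̄` (multiplication on the `A` factor). -/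
def xActBar : CbarA C →ₗ[F2] CbarA C :=
  TensorProduct.map (TensorProduct.map (LinearMap.mulLeft F2 xA) LinearMap.id) LinearMap.id

open Polynomial TensorProduct

lemma addself {M : Type*} [AddCommMonoid M] [Module F2 M] (m : M) : m + m = 0 := by
  rw [← two_smul F2 m, show (2:F2) = 0 by decide, zero_smul]

lemma coeff_mem_span {p : Polynomial F2} (h : p ∈ Ideal.span {(X : Polynomial F2)^2})
    {i : ℕ} (hi : i < 2) : p.coeff i = 0 := by
  rw [Ideal.mem_span_singleton] at h
  exact Polynomial.X_pow_dvd_iff.mp h i hi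

def eps (i : ℕ) (hi : i < 2) : Asq →ₗ[F2] F2 :=
  (Submodule.liftQ ((Ideal.span {(X:Polynomial F2)^2}).restrictScalars F2) (lcoeff F2 i)
    (fun _ hp => coeff_mem_span hp hi)) ∘ₗ
  (Submodule.Quotient.restrictScalarsEquiv F2 _).symm.toLinearMap

abbrev eps0 : Asq →ₗ[F2] F2 := eps 0 (by norm_num)
abbrev eps1 : Asq →ₗ[F2] F2 := eps 1 (by norm_num)

lemma eps_mk (i : ℕ) (hi : i < 2) (p : Polynomial F2) :
    eps i hi (Ideal.Quotient.mk _ p) = p.coeff i := rfl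

lemma asq_decomp (r : Asq) : eps0 r • (1:Asq) + eps1 r • xA = r := by
  obtain ⟨p, rfl⟩ := Ideal.Quotient.mk_surjective r
  rw [eps_mk, eps_mk]
  have h1 : ∀ (c : F2) (q : Polynomial F2), c • (Ideal.Quotient.mk (Ideal.span {(X:Polynomial F2)^2}) q) = Ideal.Quotient.mk _ (c • q) := fun c q => (Submodule.Quotient.mk_smul _ c q).symm
  rw [show (1:Asq) = Ideal.Quotient.mk _ (1:Polynomial F2) from rfl, xA, h1, h1, ← map_add, Ideal.Quotient.eq]
  rw [Ideal.mem_span_singleton]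
  rw [Polynomial.X_pow_dvd_iff]
  intro d hd
  interval_cases d <;> simp [Polynomial.coeff_one]

lemma eps0_one : eps0 (1:Asq) = 1 := by
  show eps0 (Ideal.Quotient.mk _ 1) = 1
  rw [eps_mk]; simp [Polynomial.coeff_one]

lemma eps1_one : eps1 (1:Asq) = 0 := by
  show eps1 (Ideal.Quotient.mk _ 1) = 0
  rw [eps_mk]; simp [Polynomial.coeff_one]

lemma eps0_x : eps0 xA = 0 := by rw [xA, eps_mk]; simp
lemma eps1_x : eps1 xA = 1 := by rw [xA, eps_mk]; simp

lemma eps0_xmul (r : Asq) : eps0 (xA * r) = 0 := by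
  obtain ⟨p, rfl⟩ := Ideal.Quotient.mk_surjective r
  rw [xA, ← map_mul, eps_mk]
  simp

lemma eps1_xmul (r : Asq) : eps1 (xA * r) = eps0 r := by
  obtain ⟨p, rfl⟩ := Ideal.Quotient.mk_surjective r
  rw [xA, ← map_mul, eps_mk, eps_mk]
  simp [Polynomial.coeff_X_mul]

lemma xA_sq : xA * xA = 0 := by
  rw [xA, ← map_mul, Ideal.Quotient.eq_zero_iff_mem]
  exact Ideal.mem_span_singleton.mpr ⟨1, by ring⟩

def shiftUp : Xi1 →ₗ[F2] Xi1 := Finsupp.lmapDomain F2 F2 (· + 1)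

lemma xish_single_zero (a : F2) : xish (Finsupp.single 0 a) = 0 := by
  simp [xish]

lemma xish_single_succ (n : ℕ) (a : F2) :
    xish (Finsupp.single (n+1) a) = Finsupp.single n a := by
  simp [xish]

lemma shiftUp_single (n : ℕ) (a : F2) :
    shiftUp (Finsupp.single n a) = Finsupp.single (n+1) a := by
  simp [shiftUp, Finsupp.mapDomain_single]

lemma xish_shiftUp (ξ : Xi1) : xish (shiftUp ξ) = ξ := by
  induction ξ using Finsupp.induction_linear with
  | zero => simp
  | add a b ha hb => simp [map_add, ha, hb]
  | single n a => rw [shiftUp_single, xish_single_succ]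

lemma shiftUp_xish (ξ : Xi1) : shiftUp (xish ξ) = ξ + Finsupp.single 0 (ξ 0) := by
  induction ξ using Finsupp.induction_linear with
  | zero => simp
  | add a b ha hb =>
      rw [map_add, map_add, ha, hb]
      simp only [Finsupp.add_apply, Finsupp.single_add]
      abel
  | single n a =>
      cases n with
      | zero =>
          rw [xish_single_zero]
          simp [Finsupp.single_apply, addself]
      | succ m =>
          rw [xish_single_succ, shiftUp_single]
          simp [Finsupp.single_apply]

lemma shiftUp_apply_zero (ξ : Xi1) : shiftUp ξ 0 = 0 := by
  induction ξ using Finsupp.induction_linear with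
  | zero => simp
  | add a b ha hb => simp [map_add, ha, hb]
  | single n a => rw [shiftUp_single]; simp

variable {C : Type} [AddCommGroup C] [Module F2 C]

def rho (fE : Module.End F2 C) (hf2 : fE * fE = 0) : Asq →ₐ[F2] Module.End F2 C :=
  Ideal.Quotient.liftₐ _ (aeval fE) (by
    intro p hp
    rw [Ideal.mem_span_singleton] at hp
    obtain ⟨q, rfl⟩ := hp
    rw [map_mul, map_pow, aeval_X, pow_two, hf2, zero_mul])

lemma rho_mk (fE : Module.End F2 C) (hf2 : fE * fE = 0) (p : Polynomial F2) :
    rho fE hf2 (Ideal.Quotient.mk _ p) = aeval fE p := by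
  simp [rho, Ideal.Quotient.liftₐ_apply]
  exact Ideal.Quotient.lift_mk _ _ _

lemma rho_x (fE : Module.End F2 C) (hf2 : fE * fE = 0) : rho fE hf2 xA = fE := by
  rw [xA, rho_mk, aeval_X]

lemma rho_apply (fE : Module.End F2 C) (hf2 : fE * fE = 0) (r : Asq) (c : C) :
    rho fE hf2 r c = eps0 r • c + eps1 r • fE c := by
  conv_lhs => rw [← asq_decomp r]
  rw [map_add, map_smul, map_smul, map_one, rho_x]
  simp

lemma rho_commute (fE : Module.End F2 C) (hf2 : fE * fE = 0) (g : Module.End F2 C)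
    (h : Commute fE g) (r : Asq) : Commute (rho fE hf2 r) g := by
  obtain ⟨p, rfl⟩ := Ideal.Quotient.mk_surjective r
  rw [rho_mk]
  exact (Algebra.commute_of_mem_adjoin_singleton_of_commute
    (Polynomial.aeval_mem_adjoin_singleton F2 fE) h.symm).symm

section Maps
variable {C : Type} [AddCommGroup C] [Module F2 C]

lemma Dtot_tmul (d f : C →ₗ[F2] C) (r : Asq) (ξ : Xi1) (c : C) :
    Dtot C d f ((r ⊗ₜ[F2] ξ) ⊗ₜ[F2] c) =
      (r ⊗ₜ[F2] ξ) ⊗ₜ[F2] d c + (r ⊗ₜ[F2] xish ξ) ⊗ₜ[F2] f c +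
        ((xA * r) ⊗ₜ[F2] xish ξ) ⊗ₜ[F2] c := by
  simp [Dtot, LinearMap.mulLeft_apply]

lemma xActBar_tmul (r : Asq) (ξ : Xi1) (c : C) :
    xActBar C ((r ⊗ₜ[F2] ξ) ⊗ₜ[F2] c) = ((xA * r) ⊗ₜ[F2] ξ) ⊗ₜ[F2] c := by
  simp [xActBar, LinearMap.mulLeft_apply]

def ctr0 : (Asq ⊗[F2] Xi1) →ₗ[F2] Asq :=
  (TensorProduct.rid F2 Asq).toLinearMap ∘ₗ TensorProduct.map LinearMap.id (Finsupp.lapply 0)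

def qmap (fE : Module.End F2 C) (hf2 : fE * fE = 0) : CbarA C →ₗ[F2] C :=
  TensorProduct.lift (rho fE hf2).toLinearMap ∘ₗ TensorProduct.map ctr0 LinearMap.id

lemma ctr0_tmul (r : Asq) (ξ : Xi1) : ctr0 (r ⊗ₜ[F2] ξ) = ξ 0 • r := by
  simp [ctr0, TensorProduct.rid_tmul]

lemma qmap_tmul (fE : Module.End F2 C) (hf2 : fE * fE = 0) (r : Asq) (ξ : Xi1) (c : C) :
    qmap fE hf2 ((r ⊗ₜ[F2] ξ) ⊗ₜ[F2] c) = ξ 0 • rho fE hf2 r c := by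
  simp [qmap, ctr0_tmul, TensorProduct.smul_tmul']

def iota0 : C →ₗ[F2] CbarA C :=
  TensorProduct.mk F2 (Asq ⊗[F2] Xi1) C (((1:Asq) ⊗ₜ[F2] Finsupp.single 0 1))

lemma iota0_apply (c : C) :
    iota0 c = ((1:Asq) ⊗ₜ[F2] Finsupp.single 0 (1:F2)) ⊗ₜ[F2] c := rfl

def Smap : CbarA C →ₗ[F2] CbarA C :=
  TensorProduct.map
    (TensorProduct.map ((LinearMap.toSpanSingleton F2 Asq 1) ∘ₗ eps1) shiftUp) LinearMap.id

lemma Smap_tmul (r : Asq) (ξ : Xi1) (c : C) :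
    Smap ((r ⊗ₜ[F2] ξ) ⊗ₜ[F2] c) =
      eps1 r • (((1:Asq) ⊗ₜ[F2] shiftUp ξ) ⊗ₜ[F2] c) := by
  simp [Smap, LinearMap.toSpanSingleton_apply, TensorProduct.smul_tmul']

end Maps

lemma two_nsmul_zero {M : Type*} [AddCommMonoid M] [Module F2 M] (m : M) : (2:ℕ) • m = 0 := by
  rw [two_nsmul]; exact addself m

lemma two_zsmul_zero {M : Type*} [AddCommGroup M] [Module F2 M] (m : M) : (2:ℤ) • m = 0 := by
  rw [two_zsmul]; exact addself m

section Main
variable {C : Type} [AddCommGroup C] [Module F2 C]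

lemma Dsq (d f : C →ₗ[F2] C) (hd2 : d.comp d = 0) (hchain : f.comp d = d.comp f)
    (hf2 : f.comp f = 0) : (Dtot C d f).comp (Dtot C d f) = 0 := by
  have hdd : ∀ c : C, d (d c) = 0 := fun c => LinearMap.congr_fun hd2 c
  have hff : ∀ c : C, f (f c) = 0 := fun c => LinearMap.congr_fun hf2 c
  have hdf : ∀ c : C, f (d c) = d (f c) := fun c => LinearMap.congr_fun hchain c
  apply TensorProduct.ext'
  intro rξ c
  induction rξ using TensorProduct.induction_on with
  | zero => simp
  | add a b ha hb =>
      simp only [TensorProduct.add_tmul, map_add, LinearMap.comp_apply,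
        LinearMap.zero_apply] at ha hb ⊢
      rw [← LinearMap.comp_apply, ← LinearMap.comp_apply] at *
      rw [ha, hb, add_zero]
  | tmul r ξ =>
      simp only [LinearMap.comp_apply, LinearMap.zero_apply]
      rw [Dtot_tmul, map_add, map_add, Dtot_tmul, Dtot_tmul, Dtot_tmul]
      rw [hdd, hff, hdf, ← mul_assoc, xA_sq, zero_mul]
      simp only [TensorProduct.tmul_zero, TensorProduct.zero_tmul, add_zero, zero_add]
      abel_nf
      simp [two_nsmul_zero, two_zsmul_zero]

lemma master (d f : C →ₗ[F2] C) (fE : Module.End F2 C) (hfE : fE = f) (hf2 : fE * fE = 0) :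
    (Dtot C d f).comp Smap + Smap.comp (Dtot C d f) =
      LinearMap.id + iota0.comp (qmap fE hf2) := by
  apply TensorProduct.ext'
  intro rξ c
  induction rξ using TensorProduct.induction_on with
  | zero => simp
  | add a b ha hb =>
      simp only [TensorProduct.add_tmul, map_add, LinearMap.add_apply,
        LinearMap.comp_apply, LinearMap.id_apply] at ha hb ⊢
      rw [← ha, ← hb]
  | tmul r ξ =>
      subst hfE
      simp only [LinearMap.add_apply, LinearMap.comp_apply, LinearMap.id_apply]
      rw [Smap_tmul, map_smul, Dtot_tmul, Dtot_tmul, map_add, map_add, Smap_tmul,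
        Smap_tmul, Smap_tmul, qmap_tmul, iota0_apply]
      rw [xish_shiftUp, mul_one, shiftUp_xish, eps1_xmul, rho_apply,
        show Finsupp.single 0 (ξ 0) = ξ 0 • Finsupp.single 0 (1:F2) by
          simp [Finsupp.smul_single]]
      conv_rhs => rw [show (r ⊗ₜ[F2] ξ) ⊗ₜ[F2] c
        = ((eps0 r • 1 + eps1 r • xA : Asq) ⊗ₜ[F2] ξ) ⊗ₜ[F2] c from by rw [asq_decomp]]
      simp only [TensorProduct.tmul_add, TensorProduct.add_tmul, smul_add,
        ← TensorProduct.smul_tmul', TensorProduct.tmul_smul]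
      match_scalars <;> (ring_nf; try simp [show (2:F2) = 0 by decide])

end Main

section Main2
variable {C : Type} [AddCommGroup C] [Module F2 C]

lemma rho_comm_apply (fE : Module.End F2 C) (hf2 : fE * fE = 0) (g : Module.End F2 C)
    (h : Commute fE g) (r : Asq) (c : C) : rho fE hf2 r (g c) = g (rho fE hf2 r c) := by
  have := rho_commute fE hf2 g h r
  have := LinearMap.congr_fun this.eq c
  simpa [Module.End.mul_apply] using this

lemma rho_xmul_apply (fE : Module.End F2 C) (hf2 : fE * fE = 0) (r : Asq) (c : C) :
    rho fE hf2 (xA * r) c = fE (rho fE hf2 r c) := by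
  rw [map_mul, rho_x]; rfl

lemma qD (d f : C →ₗ[F2] C) (fE : Module.End F2 C) (hfE : fE = f)
    (hf2 : fE * fE = 0) (hchain : f.comp d = d.comp f) :
    (qmap fE hf2).comp (Dtot C d f) = d.comp (qmap fE hf2) := by
  subst hfE
  have hcd : Commute fE d := by
    show fE * d = d * fE
    ext c
    simpa [Module.End.mul_apply] using LinearMap.congr_fun hchain c
  apply TensorProduct.ext'
  intro rξ c
  induction rξ using TensorProduct.induction_on with
  | zero => simp
  | add a b ha hb =>
      simp only [TensorProduct.add_tmul, map_add, LinearMap.comp_apply] at ha hb ⊢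
      rw [ha, hb]
  | tmul r ξ =>
      simp only [LinearMap.comp_apply]
      rw [Dtot_tmul, map_add, map_add, qmap_tmul, qmap_tmul, qmap_tmul, qmap_tmul,
        rho_xmul_apply]
      rw [rho_comm_apply fE hf2 fE (Commute.refl fE)]
      rw [show rho fE hf2 r (d c) = d (rho fE hf2 r c) from rho_comm_apply fE hf2 d hcd r c]
      rw [map_smul]
      rw [add_assoc, addself, add_zero]

lemma qX (f : C →ₗ[F2] C) (fE : Module.End F2 C) (hfE : fE = f) (hf2 : fE * fE = 0) :
    (qmap fE hf2).comp (xActBar C) = f.comp (qmap fE hf2) := by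
  subst hfE
  apply TensorProduct.ext'
  intro rξ c
  induction rξ using TensorProduct.induction_on with
  | zero => simp
  | add a b ha hb =>
      simp only [TensorProduct.add_tmul, map_add, LinearMap.comp_apply] at ha hb ⊢
      rw [ha, hb]
  | tmul r ξ =>
      simp only [LinearMap.comp_apply]
      rw [xActBar_tmul, qmap_tmul, qmap_tmul, rho_xmul_apply, map_smul]

lemma Diota (d f : C →ₗ[F2] C) (c : C) :
    Dtot C d f (iota0 c) = iota0 (d c) := by
  rw [iota0_apply, iota0_apply, Dtot_tmul, xish_single_zero]
  simp

lemma q_single (fE : Module.End F2 C) (hf2 : fE * fE = 0) (n : ℕ) (c : C) :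
    qmap fE hf2 (((1 : Asq) ⊗ₜ[F2] Finsupp.single n (1:F2)) ⊗ₜ[F2] c) =
      if n = 0 then c else 0 := by
  rw [qmap_tmul, map_one]
  rcases eq_or_ne n 0 with h | h <;> simp [h, Finsupp.single_apply]

end Main2

theorem stmt1
    (d f : C →ₗ[F2] C)
    (hC : IsBddAboveComplex C d)
    (hchain : f.comp d = d.comp f)
    (hf2 : f.comp f = 0) :
    -- C̄ is a complex of free A-modules …
    Module.Free Asq (CbarA C) ∧
    (Dtot C d f).comp (Dtot C d f) = 0 ∧
    -- … and q is an A-linear quasi-isomorphism C̄ → C_f: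
    ∃ q : CbarA C →ₗ[F2] C,
      -- q is given on the degree-0 column (ξ-exponent 0) by c⊗r ↦ r·c
      -- (characterized on the F-basis of A⊗Ξ:  q((1⊗ξ^{-n})⊗c) = (n = 0 ? c : 0),
      --  and q((x·r⊗ξ)⊗c) = f(q((r⊗ξ)⊗c)) since x acts on C_f by f)
      (∀ (n : ℕ) (c : C),
        q (((1 : Asq) ⊗ₜ[F2] Finsupp.single n (1 : F2)) ⊗ₜ[F2] c) =
          if n = 0 then c else 0) ∧
      (∀ (r : Asq) (ξ : Xi1) (c : C),
        q (((xA * r) ⊗ₜ[F2] ξ) ⊗ₜ[F2] c) = f (q ((r ⊗ₜ[F2] ξ) ⊗ₜ[F2] c))) ∧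
      -- q is A-linear, x acting on C_f by f
      q.comp (xActBar C) = f.comp q ∧
      -- q is a chain map
      q.comp (Dtot C d f) = d.comp q ∧
      -- q is a quasi-isomorphism: it induces a surjection on homology …
      (∀ c : C, d c = 0 → ∃ z : CbarA C,
        z ∈ LinearMap.ker (Dtot C d f) ∧ ∃ c' : C, q z = c + d c') ∧
      -- … and an injection on homology
      (∀ z : CbarA C, z ∈ LinearMap.ker (Dtot C d f) →
        (∃ c' : C, q z = d c') → ∃ w : CbarA C, z = Dtot C d f w) := by
  obtain ⟨hd2, -⟩ := hC
  have hf2E : (f : Module.End F2 C) * f = 0 := by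
    rw [Module.End.mul_eq_comp]; exact hf2
  refine ⟨?_, Dsq d f hd2 hchain hf2, qmap f hf2E, ?_, ?_, ?_, ?_, ?_, ?_⟩
  · exact Module.Free.of_equiv
      (TensorProduct.AlgebraTensorModule.assoc F2 F2 Asq Asq Xi1 C).symm
  · exact fun n c => q_single f hf2E n c
  · intro r ξ c
    rw [qmap_tmul, qmap_tmul, rho_xmul_apply, map_smul]
  · exact qX f f rfl hf2E
  · exact qD d f f rfl hf2E hchain
  · intro c hc
    refine ⟨iota0 c, ?_, 0, ?_⟩
    · rw [LinearMap.mem_ker, Diota d f c, hc, map_zero]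
    · have := q_single (C := C) f hf2E 0 c
      rw [iota0_apply, this]
      simp
  · rintro z hz ⟨c', hc'⟩
    refine ⟨Smap z + iota0 c', ?_⟩
    have hm := LinearMap.congr_fun (master d f f rfl hf2E) z
    simp only [LinearMap.add_apply, LinearMap.comp_apply, LinearMap.id_apply] at hm
    rw [LinearMap.mem_ker.mp hz, map_zero, add_zero, hc'] at hm
    rw [map_add, hm, Diota d f c', add_assoc, addself, add_zero]
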